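/- arXiv:2008.04587 — 9 statements merged into one kernel-verified Lean document; each statement's English description precedes it below -/
import Mathlib

section
/- Every critical independent set of a finite simple graph G is a crown; that is, if S is an independent set with |S| - |N(S)| = max{|I| - |N(I)| : I independent in G}, then there exists a matching from N(S) into S. -/
open Finset

variable {V : Type*}

namespace CrownPaper

variable [Fintype V] [DecidableEq V]

/-- The (open) neighborhood of a finite set of vertices. -/
def nbrs (G : SimpleGraph V) [DecidableRel G.Adj] (A : Finset V) : Finset V :=
  univ.filter (fun v => ∃ a ∈ A, G.Adj v a)

/-- The closed neighborhood `N[A] = A ∪ N(A)`. -/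
def closedNbrs (G : SimpleGraph V) [DecidableRel G.Adj] (A : Finset V) : Finset V :=
  A ∪ nbrs G A

/-- `S` is an independent set of `G`. -/
def IsIndep (G : SimpleGraph V) (S : Finset V) : Prop :=
  ∀ a ∈ S, ∀ b ∈ S, ¬ G.Adj a b

/-- The difference `d(S) = |S| - |N(S)|`. -/
def diff (G : SimpleGraph V) [DecidableRel G.Adj] (S : Finset V) : ℤ :=
  (S.card : ℤ) - ((nbrs G S).card : ℤ)

/-- `S` is a critical independent set. -/
def IsCritIndep (G : SimpleGraph V) [DecidableRel G.Adj] (S : Finset V) : Prop :=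
  IsIndep G S ∧ ∀ I : Finset V, IsIndep G I → diff G I ≤ diff G S

/-- `S` is a crown: an independent set with a matching from `N(S)` into `S`. -/
def IsCrown (G : SimpleGraph V) [DecidableRel G.Adj] (S : Finset V) : Prop :=
  IsIndep G S ∧ ∃ f : V → V, (∀ v ∈ nbrs G S, f v ∈ S ∧ G.Adj v (f v)) ∧
    Set.InjOn f (nbrs G S : Set V)

/-- `S` is a local maximum independent set: a maximum independent set of `G[N[S]]`. -/
def IsLocalMaxIndep (G : SimpleGraph V) [DecidableRel G.Adj] (S : Finset V) : Prop :=
  IsIndep G S ∧ ∀ I : Finset V, IsIndep G I → I ⊆ closedNbrs G S → I.card ≤ S.card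

/-- The independence number. -/
noncomputable def alpha (G : SimpleGraph V) : ℕ :=
  sSup {n | ∃ S : Finset V, IsIndep G S ∧ S.card = n}

/-- `M` is a matching of `G`, given as a finite set of (ordered) edges. -/
def IsMatching (G : SimpleGraph V) (M : Finset (V × V)) : Prop :=
  (∀ e ∈ M, G.Adj e.1 e.2) ∧
  ∀ e ∈ M, ∀ e' ∈ M, e ≠ e' →
    e.1 ≠ e'.1 ∧ e.1 ≠ e'.2 ∧ e.2 ≠ e'.1 ∧ e.2 ≠ e'.2

/-- The matching number. -/
noncomputable def mu (G : SimpleGraph V) : ℕ :=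
  sSup {n | ∃ M : Finset (V × V), IsMatching G M ∧ M.card = n}

/-- `G` has a perfect matching. -/
def HasPerfectMatching (G : SimpleGraph V) : Prop :=
  ∃ M : Finset (V × V), IsMatching G M ∧ ∀ v : V, ∃ e ∈ M, v = e.1 ∨ v = e.2

/-- `G` is a König–Egerváry graph: `α(G) + μ(G) = |V(G)|`. -/
def IsKonigEgervary (G : SimpleGraph V) : Prop :=
  alpha G + mu G = Fintype.card V

/-- `G` is bipartite. -/
def IsBipartite (G : SimpleGraph V) : Prop :=
  ∃ X : Set V, ∀ a b : V, G.Adj a b → (a ∈ X ↔ b ∉ X)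

end CrownPaper

open CrownPaper

theorem crit_indep_is_crown (G : SimpleGraph V) [Fintype V] [DecidableEq V]
    [DecidableRel G.Adj] (S : Finset V) (hS : IsCritIndep G S) : IsCrown G S := by
  classical
  obtain ⟨hind, hmax⟩ := hS
  refine ⟨hind, ?_⟩
  set t : V → Finset V := fun v =>
    if v ∈ nbrs G S then S.filter (fun x => G.Adj v x) else univ with ht
  have hall : ∀ s : Finset V, s.card ≤ (s.biUnion t).card := by
    intro s
    by_cases hsub : s ⊆ nbrs G S
    · set W := S.filter (fun x => ∃ v ∈ s, G.Adj v x) with hW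
      have hbi : s.biUnion t = W := by
        ext x
        simp only [mem_biUnion, hW, mem_filter, ht]
        constructor
        · rintro ⟨v, hv, hx⟩
          rw [if_pos (hsub hv)] at hx
          simp only [mem_filter] at hx
          exact ⟨hx.1, v, hv, hx.2⟩
        · rintro ⟨hxS, v, hv, hadj⟩
          refine ⟨v, hv, ?_⟩
          rw [if_pos (hsub hv)]
          exact mem_filter.mpr ⟨hxS, hadj⟩
      rw [hbi]
      have hWsub : W ⊆ S := filter_subset _ _
      set I := S \ W with hI
      have hIind : IsIndep G I := fun a ha b hb =>
        hind a (sdiff_subset ha) b (sdiff_subset hb)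
      have hnsub : nbrs G I ⊆ nbrs G S \ s := by
        intro u hu
        simp only [nbrs, mem_filter, mem_univ, true_and] at hu
        obtain ⟨a, ha, hadj⟩ := hu
        have haS : a ∈ S := sdiff_subset ha
        refine mem_sdiff.mpr ⟨?_, ?_⟩
        · simp only [nbrs, mem_filter, mem_univ, true_and]
          exact ⟨a, haS, hadj⟩
        · intro hus
          have : a ∈ W := mem_filter.mpr ⟨haS, u, hus, hadj⟩
          exact (mem_sdiff.mp ha).2 this
      have h1 : diff G I ≤ diff G S := hmax I hIind
      simp only [diff] at h1
      have hIcard : I.card = S.card - W.card := card_sdiff_of_subset hWsub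
      have hWS : W.card ≤ S.card := card_le_card hWsub
      have hsN : s.card ≤ (nbrs G S).card := card_le_card hsub
      have hcard2 : (nbrs G I).card ≤ (nbrs G S).card - s.card := by
        calc (nbrs G I).card ≤ (nbrs G S \ s).card := card_le_card hnsub
        _ = (nbrs G S).card - s.card := card_sdiff_of_subset hsub
      omega
    · obtain ⟨v, hv, hvn⟩ := not_subset.mp hsub
      have hsup : univ ⊆ s.biUnion t := by
        intro x _
        refine mem_biUnion.mpr ⟨v, hv, ?_⟩
        rw [ht]
        simp only [if_neg hvn]
        exact mem_univ x
      calc s.card ≤ univ.card := card_le_card (subset_univ s)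
      _ ≤ _ := card_le_card hsup
  obtain ⟨f, hinj, hf⟩ := (Finset.all_card_le_biUnion_card_iff_existsInjective' t).mp hall
  refine ⟨f, ?_, hinj.injOn⟩
  intro v hv
  have h := hf v
  rw [ht] at h
  simp only [if_pos hv, mem_filter] at h
  exact ⟨h.1, h.2⟩
end

section
/- Every crown of a finite simple graph G is a local maximum independent set; that is, if S is an independent set with a matching from N(S) into S, then S is a maximum independent set of the subgraph induced by N[S] = S ∪ N(S). -/
open Finset

variable {V : Type*}

open CrownPaper

theorem crown_is_local_max_indep (G : SimpleGraph V) [Fintype V] [DecidableEq V]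
    [DecidableRel G.Adj] (S : Finset V) (hS : IsCrown G S) : IsLocalMaxIndep G S := by
  obtain ⟨hind, f, hf, hinj⟩ := hS
  refine ⟨hind, fun I hI hIsub => ?_⟩
  apply Finset.card_le_card_of_injOn (fun v => if v ∈ S then v else f v)
  · intro v hv
    by_cases hvS : v ∈ S
    · simpa [hvS]
    · have hvN : v ∈ nbrs G S := by
        have := hIsub hv
        simp only [closedNbrs, Finset.mem_union] at this
        tauto
      simpa [hvS] using (hf v hvN).1
  · intro a ha b hb hab
    by_cases haS : a ∈ S <;> by_cases hbS : b ∈ S <;> simp [haS, hbS] at hab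
    · exact hab
    · -- a ∈ S, b ∉ S, a = f b
      have hbN : b ∈ nbrs G S := by
        have := hIsub hb
        simp only [closedNbrs, Finset.mem_union] at this; tauto
      have hadj := (hf b hbN).2
      rw [← hab] at hadj
      exact absurd hadj.symm (hI a ha b hb)
    · have haN : a ∈ nbrs G S := by
        have := hIsub ha
        simp only [closedNbrs, Finset.mem_union] at this; tauto
      have hadj := (hf a haN).2
      rw [hab] at hadj
      exact absurd hadj (hI a ha b hb)
    · have haN : a ∈ nbrs G S := by
        have := hIsub ha
        simp only [closedNbrs, Finset.mem_union] at this; tauto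
      have hbN : b ∈ nbrs G S := by
        have := hIsub hb
        simp only [closedNbrs, Finset.mem_union] at this; tauto
      exact hinj haN hbN hab
end

section
/- If S is a crown of a graph G, then the subgraph induced by N[S] is a König–Egerváry graph, i.e., α(G[N[S]]) + μ(G[N[S]]) = |N[S]|. -/
open Finset

variable {V : Type*}

/-! In `G[N[S]]` the crown `S` stays independent and the crown matching `v ↦ f v` of `N(S)`
into `S` stays a matching, so `α + μ ≥ |S| + |N(S)| = |N[S]|`. The reverse inequality
`α + μ ≤ |V|` holds in every finite graph. -/

namespace CrownPaper

section Bounds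

variable {W : Type*} [Fintype W] {H : SimpleGraph W}

/-- Each edge of `M` has an endpoint outside `I`, and distinct edges give distinct such
endpoints, so `I` and these endpoints are disjoint sets of size `|I|` and `|M|`. -/
lemma card_add_card_le_of_isIndep_of_isMatching {I : Finset W} (hI : IsIndep H I)
    {M : Finset (W × W)} (hM : IsMatching H M) : I.card + M.card ≤ Fintype.card W := by
  classical
  let g : W × W → W := fun e => if e.1 ∈ I then e.2 else e.1
  have hg_notMem : ∀ e ∈ M, g e ∉ I := by
    intro e he
    by_cases h₁ : e.1 ∈ I
    · simpa only [g, if_pos h₁] using fun h₂ => hI e.1 h₁ e.2 h₂ (hM.1 e he)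
    · simpa only [g, if_neg h₁] using h₁
  have hg_inj : Set.InjOn g M := by
    intro e he e' he' heq
    by_contra hne
    obtain ⟨h₁, h₂, h₃, h₄⟩ := hM.2 e he e' he' hne
    simp only [g] at heq
    split_ifs at heq <;> simp_all
  have hdisj : Disjoint I (M.image g) := by
    rw [Finset.disjoint_right]
    intro a ha
    obtain ⟨e, he, rfl⟩ := Finset.mem_image.mp ha
    exact hg_notMem e he
  calc I.card + M.card = (I ∪ M.image g).card := by
        rw [Finset.card_union_of_disjoint hdisj, Finset.card_image_of_injOn hg_inj]
    _ ≤ Fintype.card W := Finset.card_le_univ _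

lemma bddAbove_indepCards :
    BddAbove {n | ∃ S : Finset W, IsIndep H S ∧ S.card = n} :=
  ⟨Fintype.card W, by rintro n ⟨S, -, rfl⟩; exact Finset.card_le_univ S⟩

lemma bddAbove_matchingCards :
    BddAbove {n | ∃ M : Finset (W × W), IsMatching H M ∧ M.card = n} :=
  ⟨Fintype.card (W × W), by rintro n ⟨M, -, rfl⟩; exact Finset.card_le_univ M⟩

lemma IsIndep.card_le_alpha {I : Finset W} (hI : IsIndep H I) : I.card ≤ alpha H :=
  le_csSup bddAbove_indepCards ⟨I, hI, rfl⟩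

lemma IsMatching.card_le_mu {M : Finset (W × W)} (hM : IsMatching H M) : M.card ≤ mu H :=
  le_csSup bddAbove_matchingCards ⟨M, hM, rfl⟩

lemma exists_isIndep_card_eq_alpha : ∃ I : Finset W, IsIndep H I ∧ I.card = alpha H :=
  Nat.sSup_mem (s := {n | ∃ I : Finset W, IsIndep H I ∧ I.card = n})
    ⟨0, ∅, by simp [IsIndep], rfl⟩ bddAbove_indepCards

lemma exists_isMatching_card_eq_mu : ∃ M : Finset (W × W), IsMatching H M ∧ M.card = mu H :=
  Nat.sSup_mem (s := {n | ∃ M : Finset (W × W), IsMatching H M ∧ M.card = n})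
    ⟨0, ∅, by simp [IsMatching], rfl⟩ bddAbove_matchingCards

lemma alpha_add_mu_le_card : alpha H + mu H ≤ Fintype.card W := by
  obtain ⟨I, hI, hIcard⟩ := exists_isIndep_card_eq_alpha (H := H)
  obtain ⟨M, hM, hMcard⟩ := exists_isMatching_card_eq_mu (H := H)
  rw [← hIcard, ← hMcard]
  exact card_add_card_le_of_isIndep_of_isMatching hI hM

end Bounds

section Comap

variable {W : Type*} {H : SimpleGraph W} {G : SimpleGraph V}

lemma IsIndep.preimage (φ : H ↪g G) {I : Finset V} (hI : IsIndep G I) :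
    IsIndep H (I.preimage φ φ.injective.injOn) := by
  intro a ha b hb hab
  exact hI _ (Finset.mem_preimage.mp ha) _ (Finset.mem_preimage.mp hb) (φ.map_adj_iff.mpr hab)

lemma IsMatching.preimage (φ : H ↪g G) {M : Finset (V × V)} (hM : IsMatching G M) :
    IsMatching H (M.preimage (Prod.map φ φ) (φ.injective.prodMap φ.injective).injOn) := by
  refine ⟨fun e he => φ.map_adj_iff.mp (hM.1 _ (Finset.mem_preimage.mp he)), ?_⟩
  intro e he e' he' hne
  have hne' : Prod.map φ φ e ≠ Prod.map φ φ e' :=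
    (φ.injective.prodMap φ.injective).ne hne
  obtain ⟨h₁, h₂, h₃, h₄⟩ :=
    hM.2 _ (Finset.mem_preimage.mp he) _ (Finset.mem_preimage.mp he') hne'
  exact ⟨ne_of_apply_ne φ h₁, ne_of_apply_ne φ h₂, ne_of_apply_ne φ h₃, ne_of_apply_ne φ h₄⟩

variable [Fintype W]

lemma IsIndep.card_le_alpha_of_embedding (φ : H ↪g G) {I : Finset V} (hI : IsIndep G I)
    (hrange : ∀ v ∈ I, v ∈ Set.range φ) : I.card ≤ alpha H := by
  classical
  calc I.card = (I.preimage φ φ.injective.injOn).card := by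
        rw [Finset.card_preimage, Finset.filter_true_of_mem hrange]
    _ ≤ alpha H := (hI.preimage φ).card_le_alpha

lemma IsMatching.card_le_mu_of_embedding (φ : H ↪g G) {M : Finset (V × V)}
    (hM : IsMatching G M) (hrange : ∀ e ∈ M, e.1 ∈ Set.range φ ∧ e.2 ∈ Set.range φ) :
    M.card ≤ mu H := by
  classical
  have hrange' : ∀ e ∈ M, e ∈ Set.range (Prod.map φ φ) := by
    intro e he
    obtain ⟨⟨a, ha⟩, ⟨b, hb⟩⟩ := hrange e he
    exact ⟨(a, b), Prod.ext ha hb⟩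
  calc M.card = (M.preimage (Prod.map φ φ) (φ.injective.prodMap φ.injective).injOn).card := by
        rw [Finset.card_preimage, Finset.filter_true_of_mem hrange']
    _ ≤ mu H := (hM.preimage φ).card_le_mu

end Comap

section Crown

variable [Fintype V] {G : SimpleGraph V} [DecidableRel G.Adj] {S : Finset V}

lemma IsIndep.disjoint_nbrs (hS : IsIndep G S) : Disjoint S (nbrs G S) := by
  rw [Finset.disjoint_left]
  intro a haS haN
  obtain ⟨b, hbS, hab⟩ := (Finset.mem_filter.mp haN).2
  exact hS a haS b hbS hab

variable [DecidableEq V]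

lemma IsIndep.card_closedNbrs (hS : IsIndep G S) :
    (closedNbrs G S).card = S.card + (nbrs G S).card :=
  Finset.card_union_of_disjoint hS.disjoint_nbrs

lemma IsCrown.exists_isMatching (hS : IsCrown G S) :
    ∃ M : Finset (V × V), IsMatching G M ∧ M.card = (nbrs G S).card ∧
      ∀ e ∈ M, e.1 ∈ nbrs G S ∧ e.2 ∈ S := by
  obtain ⟨hSind, f, hf, hfinj⟩ := hS
  have hN_notMem_S : ∀ v ∈ nbrs G S, v ∉ S := fun v hv hvS =>
    Finset.disjoint_left.mp hSind.disjoint_nbrs hvS hv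
  refine ⟨(nbrs G S).image fun v => (v, f v), ⟨?_, ?_⟩, ?_, ?_⟩
  · intro e he
    obtain ⟨v, hv, rfl⟩ := Finset.mem_image.mp he
    exact (hf v hv).2
  · intro e he e' he' hne
    obtain ⟨v, hv, rfl⟩ := Finset.mem_image.mp he
    obtain ⟨w, hw, rfl⟩ := Finset.mem_image.mp he'
    have hvw : v ≠ w := fun h => hne (h ▸ rfl)
    refine ⟨hvw, ?_, ?_, fun h => hvw (hfinj hv hw h)⟩
    · exact fun h : v = f w => hN_notMem_S v hv (h ▸ (hf w hw).1)
    · exact fun h : f v = w => hN_notMem_S w hw (h ▸ (hf v hv).1)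
  · exact Finset.card_image_of_injective _ fun v w h => congrArg Prod.fst h
  · intro e he
    obtain ⟨v, hv, rfl⟩ := Finset.mem_image.mp he
    exact ⟨hv, (hf v hv).1⟩

end Crown

end CrownPaper

open CrownPaper

theorem crown_closed_nbhd_konig_egervary (G : SimpleGraph V) [Fintype V] [DecidableEq V]
    [DecidableRel G.Adj] (S : Finset V) (hS : IsCrown G S) :
    IsKonigEgervary (G.induce (↑(closedNbrs G S) : Set V)) := by
  set C := closedNbrs G S
  have hrange : ∀ v ∈ C, v ∈ Set.range (SimpleGraph.Embedding.induce (G := G) (C : Set V)) :=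
    fun v hv => ⟨⟨v, hv⟩, rfl⟩
  obtain ⟨M, hM, hMcard, hMends⟩ := hS.exists_isMatching
  have hS_le : S.card ≤ alpha (G.induce (C : Set V)) :=
    hS.1.card_le_alpha_of_embedding _ fun v hv => hrange v (Finset.subset_union_left hv)
  have hN_le : (nbrs G S).card ≤ mu (G.induce (C : Set V)) := hMcard ▸
    hM.card_le_mu_of_embedding _ fun e he =>
      ⟨hrange _ (Finset.subset_union_right (hMends e he).1),
        hrange _ (Finset.subset_union_left (hMends e he).2)⟩
  refine le_antisymm alpha_add_mu_le_card ?_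
  calc Fintype.card (C : Set V) = S.card + (nbrs G S).card := by
        simp only [Finset.coe_sort_coe, Fintype.card_coe]
        exact hS.1.card_closedNbrs
    _ ≤ _ := add_le_add hS_le hN_le
end

section
/- If A and B are two crowns of a graph G, then there exists a perfect matching between A ∩ N(B) and B ∩ N(A); in particular |A ∩ N(B)| = |B ∩ N(A)|. -/
open Finset

variable {V : Type*}

open CrownPaper

theorem crowns_perfect_matching_between (G : SimpleGraph V) [Fintype V] [DecidableEq V]
    [DecidableRel G.Adj] (A B : Finset V) (hA : IsCrown G A) (hB : IsCrown G B) :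
    (∃ g : V → V, Set.BijOn g (↑(A ∩ nbrs G B) : Set V) (↑(B ∩ nbrs G A) : Set V) ∧
      ∀ x ∈ A ∩ nbrs G B, G.Adj x (g x)) ∧
    (A ∩ nbrs G B).card = (B ∩ nbrs G A).card := by
  obtain ⟨hAind, f, hf, hfinj⟩ := hA
  obtain ⟨hBind, g, hg, hginj⟩ := hB
  have hgmaps : ∀ x ∈ A ∩ nbrs G B, g x ∈ B ∩ nbrs G A := by
    intro x hx
    simp only [mem_inter] at hx ⊢
    obtain ⟨hxA, hxN⟩ := hx
    obtain ⟨hgB, hadj⟩ := hg x hxN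
    refine ⟨hgB, ?_⟩
    simp only [nbrs, mem_filter, mem_univ, true_and]
    exact ⟨x, hxA, hadj.symm⟩
  have hfmaps : ∀ x ∈ B ∩ nbrs G A, f x ∈ A ∩ nbrs G B := by
    intro x hx
    simp only [mem_inter] at hx ⊢
    obtain ⟨hxB, hxN⟩ := hx
    obtain ⟨hfA, hadj⟩ := hf x hxN
    refine ⟨hfA, ?_⟩
    simp only [nbrs, mem_filter, mem_univ, true_and]
    exact ⟨x, hxB, hadj.symm⟩
  have hsubg : (↑(A ∩ nbrs G B) : Set V) ⊆ ↑(nbrs G B) := by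
    intro x hx
    simp only [coe_inter, Set.mem_inter_iff, mem_coe] at hx ⊢
    exact hx.2
  have hsubf : (↑(B ∩ nbrs G A) : Set V) ⊆ ↑(nbrs G A) := by
    intro x hx
    simp only [coe_inter, Set.mem_inter_iff, mem_coe] at hx ⊢
    exact hx.2
  have hginj' : Set.InjOn g (↑(A ∩ nbrs G B) : Set V) := hginj.mono hsubg
  have hfinj' : Set.InjOn f (↑(B ∩ nbrs G A) : Set V) := hfinj.mono hsubf
  have card1 : (A ∩ nbrs G B).card ≤ (B ∩ nbrs G A).card :=
    Finset.card_le_card_of_injOn g hgmaps hginj'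
  have card2 : (B ∩ nbrs G A).card ≤ (A ∩ nbrs G B).card :=
    Finset.card_le_card_of_injOn f hfmaps hfinj'
  have hcard : (A ∩ nbrs G B).card = (B ∩ nbrs G A).card := le_antisymm card1 card2
  have himg : (A ∩ nbrs G B).image g = B ∩ nbrs G A := by
    apply Finset.eq_of_subset_of_card_le
    · intro y hy
      simp only [mem_image] at hy
      obtain ⟨x, hx, rfl⟩ := hy
      exact hgmaps x hx
    · rw [Finset.card_image_of_injOn hginj']
      exact hcard.ge
  refine ⟨⟨g, ⟨?_, hginj', ?_⟩, ?_⟩, hcard⟩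
  · intro x hx
    exact_mod_cast hgmaps x (by exact_mod_cast hx)
  · intro y hy
    rw [← himg] at hy
    simp only [coe_image, Set.mem_image] at hy ⊢
    exact hy
  · intro x hx
    have := (hg x (mem_inter.mp hx).2).2
    exact this
end

section
/- If A and B are crowns of a graph G, then A ∪ (B − N[A]) and B ∪ (A − N[B]) are crowns of G and they have the same cardinality. (Hence the family of crowns forms an augmentoid.) -/
open Finset

variable {V : Type*}

open CrownPaper

/-!
Let `fA`, `fB` match `N(A)` into `A` and `N(B)` into `B`. Each restricts to an injection between
`B ∩ N(A)` and `A ∩ N(B)`, so these sets have the same size and `fB` maps `A ∩ N(B)` onto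
`B ∩ N(A)`. Hence `fB` sends `N(B) \ N[A]` outside `N[A]`, and matching `N(A)` by `fA`
and the rest of the new neighbourhood by `fB` makes `A ∪ (B \ N[A])` a crown. Its size is
`|A| + |B| - |A ∩ B| - |B ∩ N(A)|`, which is symmetric in `A` and `B`.
-/

namespace CrownPaper

section
variable [Fintype V] {G : SimpleGraph V} [DecidableRel G.Adj]

@[simp]
lemma mem_nbrs {A : Finset V} {v : V} : v ∈ nbrs G A ↔ ∃ a ∈ A, G.Adj v a := by
  simp [nbrs]

variable (G) in
def IsCrownMatching (S : Finset V) (f : V → V) : Prop :=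
  (∀ v ∈ nbrs G S, f v ∈ S ∧ G.Adj v (f v)) ∧ Set.InjOn f (nbrs G S : Set V)

lemma isCrown_iff {S : Finset V} : IsCrown G S ↔ IsIndep G S ∧ ∃ f, IsCrownMatching G S f :=
  Iff.rfl

lemma IsIndep.disjoint_nbrs_s4 {A : Finset V} (hA : IsIndep G A) : Disjoint A (nbrs G A) := by
  rw [disjoint_left]
  intro a ha hna
  obtain ⟨b, hb, hab⟩ := mem_nbrs.1 hna
  exact hA a ha b hb hab

end

variable [Fintype V] [DecidableEq V] {G : SimpleGraph V} [DecidableRel G.Adj]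
  {A B : Finset V} {f fA fB : V → V}

namespace IsCrownMatching

lemma mapsTo_inter_nbrs (hf : IsCrownMatching G A f) :
    Set.MapsTo f ↑(B ∩ nbrs G A) ↑(A ∩ nbrs G B) := by
  intro v hv
  simp only [coe_inter, Set.mem_inter_iff, mem_coe] at hv ⊢
  obtain ⟨hfv, hadj⟩ := hf.1 v hv.2
  exact ⟨hfv, mem_nbrs.2 ⟨v, hv.1, hadj.symm⟩⟩

lemma injOn_inter_nbrs (hf : IsCrownMatching G A f) : Set.InjOn f ↑(B ∩ nbrs G A) :=
  hf.2.mono (by simp)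

lemma card_inter_nbrs_le (hf : IsCrownMatching G A f) : #(B ∩ nbrs G A) ≤ #(A ∩ nbrs G B) :=
  card_le_card_of_injOn f hf.mapsTo_inter_nbrs hf.injOn_inter_nbrs

lemma mem_of_apply_mem_nbrs (hfA : IsCrownMatching G A fA) (hfB : IsCrownMatching G B fB)
    {v : V} (hv : v ∈ nbrs G B) (hfv : fB v ∈ nbrs G A) : v ∈ A := by
  have hsurj := surjOn_of_injOn_of_card_le fB hfB.mapsTo_inter_nbrs hfB.injOn_inter_nbrs
    hfA.card_inter_nbrs_le
  obtain ⟨a, ha, hfa⟩ := hsurj (show fB v ∈ ↑(B ∩ nbrs G A) by simp [(hfB.1 v hv).1, hfv])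
  rw [coe_inter, Set.mem_inter_iff, mem_coe, mem_coe] at ha
  exact hfB.2 ha.2 hv hfa ▸ ha.1

end IsCrownMatching

lemma IsIndep.union_sdiff_closedNbrs (hA : IsIndep G A) (hB : IsIndep G B) :
    IsIndep G (A ∪ (B \ closedNbrs G A)) := by
  have hfar : ∀ a ∈ A, ∀ b ∈ B \ closedNbrs G A, ¬ G.Adj a b := fun a ha b hb hab =>
    (mem_sdiff.1 hb).2 (mem_union_right _ (mem_nbrs.2 ⟨a, ha, hab.symm⟩))
  intro a ha b hb hab
  rcases mem_union.1 ha with ha | ha <;> rcases mem_union.1 hb with hb | hb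
  · exact hA a ha b hb hab
  · exact hfar a ha b hb hab
  · exact hfar b hb a ha hab.symm
  · exact hB a (mem_sdiff.1 ha).1 b (mem_sdiff.1 hb).1 hab

lemma nbrs_union_sdiff_closedNbrs_subset :
    nbrs G (A ∪ (B \ closedNbrs G A)) ⊆ nbrs G A ∪ (nbrs G B \ A) := by
  intro v hv
  obtain ⟨c, hc, hvc⟩ := mem_nbrs.1 hv
  rcases mem_union.1 hc with hc | hc
  · exact mem_union_left _ (mem_nbrs.2 ⟨c, hc, hvc⟩)
  · obtain ⟨hcB, hcA⟩ := mem_sdiff.1 hc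
    refine mem_union_right _ (mem_sdiff.2 ⟨mem_nbrs.2 ⟨c, hcB, hvc⟩, fun hvA => ?_⟩)
    exact hcA (mem_union_right _ (mem_nbrs.2 ⟨v, hvA, hvc.symm⟩))

lemma IsCrownMatching.union_sdiff_closedNbrs (hfA : IsCrownMatching G A fA)
    (hfB : IsCrownMatching G B fB) :
    IsCrownMatching G (A ∪ (B \ closedNbrs G A)) fun v => if v ∈ nbrs G A then fA v else fB v := by
  have houter : ∀ v ∈ nbrs G (A ∪ (B \ closedNbrs G A)), v ∉ nbrs G A →
      v ∈ nbrs G B ∧ v ∉ A := by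
    intro v hv hvA
    simpa [hvA] using nbrs_union_sdiff_closedNbrs_subset hv
  constructor
  · intro v hv
    by_cases hvA : v ∈ nbrs G A
    · simp only [hvA, if_true]
      exact ⟨mem_union_left _ (hfA.1 v hvA).1, (hfA.1 v hvA).2⟩
    · obtain ⟨hvB, hvA'⟩ := houter v hv hvA
      obtain ⟨hfvB, hadj⟩ := hfB.1 v hvB
      simp only [hvA, if_false]
      refine ⟨mem_union_right _ (mem_sdiff.2 ⟨hfvB, fun hfv => ?_⟩), hadj⟩
      rcases mem_union.1 hfv with hfv | hfv
      · exact hvA (mem_nbrs.2 ⟨fB v, hfv, hadj⟩)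
      · exact hvA' (hfA.mem_of_apply_mem_nbrs hfB hvB hfv)
  · have hcross : ∀ u ∈ nbrs G A, ∀ v ∈ nbrs G B, fA u = fB v → v ∈ nbrs G A :=
      fun u hu v hv huv => mem_nbrs.2 ⟨fB v, huv ▸ (hfA.1 u hu).1, (hfB.1 v hv).2⟩
    intro u hu v hv huv
    simp only [mem_coe] at hu hv
    by_cases huA : u ∈ nbrs G A <;> by_cases hvA : v ∈ nbrs G A <;>
      simp only [huA, hvA, if_true, if_false] at huv
    · exact hfA.2 huA hvA huv
    · exact absurd (hcross u huA v (houter v hv hvA).1 huv) hvA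
    · exact absurd (hcross v hvA u (houter u hu huA).1 huv.symm) huA
    · exact hfB.2 (houter u hu huA).1 (houter v hv hvA).1 huv

lemma IsCrown.union_sdiff_closedNbrs (hA : IsCrown G A) (hB : IsCrown G B) :
    IsCrown G (A ∪ (B \ closedNbrs G A)) := by
  obtain ⟨hAi, fA, hfA⟩ := isCrown_iff.1 hA
  obtain ⟨hBi, fB, hfB⟩ := isCrown_iff.1 hB
  exact isCrown_iff.2 ⟨hAi.union_sdiff_closedNbrs hBi, _, hfA.union_sdiff_closedNbrs hfB⟩

lemma IsCrown.card_inter_nbrs_comm (hA : IsCrown G A) (hB : IsCrown G B) :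
    #(B ∩ nbrs G A) = #(A ∩ nbrs G B) := by
  obtain ⟨-, fA, hfA⟩ := isCrown_iff.1 hA
  obtain ⟨-, fB, hfB⟩ := isCrown_iff.1 hB
  exact le_antisymm hfA.card_inter_nbrs_le hfB.card_inter_nbrs_le

lemma IsIndep.card_union_sdiff_closedNbrs (hA : IsIndep G A) :
    #(A ∪ (B \ closedNbrs G A)) + #(A ∩ B) + #(B ∩ nbrs G A) = #A + #B := by
  have hsplit : #(B ∩ closedNbrs G A) = #(A ∩ B) + #(B ∩ nbrs G A) := by
    rw [closedNbrs, inter_union_distrib_left, inter_comm B A,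
      card_union_of_disjoint (hA.disjoint_nbrs_s4.mono inter_subset_left inter_subset_right)]
  have hdisj : Disjoint A (B \ closedNbrs G A) := disjoint_sdiff.mono_left subset_union_left
  rw [card_union_of_disjoint hdisj, add_assoc, add_assoc, ← hsplit, card_sdiff_add_card_inter]

end CrownPaper

open CrownPaper

theorem crowns_augmentation (G : SimpleGraph V) [Fintype V] [DecidableEq V]
    [DecidableRel G.Adj] (A B : Finset V) (hA : IsCrown G A) (hB : IsCrown G B) :
    IsCrown G (A ∪ (B \ closedNbrs G A)) ∧ IsCrown G (B ∪ (A \ closedNbrs G B)) ∧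
    (A ∪ (B \ closedNbrs G A)).card = (B ∪ (A \ closedNbrs G B)).card := by
  refine ⟨hA.union_sdiff_closedNbrs hB, hB.union_sdiff_closedNbrs hA, ?_⟩
  have hAB := hA.1.card_union_sdiff_closedNbrs (B := B)
  have hBA := hB.1.card_union_sdiff_closedNbrs (B := A)
  rw [inter_comm B A, hB.card_inter_nbrs_comm hA] at hBA
  omega
end

section
/- Every crown of a graph G is included in the closed neighborhood N[B] of each maximum crown B of G. -/
open Finset

variable {V : Type*}

open CrownPaper

section Aux

variable [Fintype V] [DecidableEq V]

omit [DecidableEq V] in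
lemma mem_nbrs_aux {G : SimpleGraph V} [DecidableRel G.Adj] {A : Finset V} {v : V} :
    v ∈ nbrs G A ↔ ∃ a ∈ A, G.Adj v a := by
  simp [nbrs]

omit [DecidableEq V] in
/-- Key lemma: if `A` and `B` are crowns (with matchings `fA`, `fB`) and
`v ∈ N(B) \ A`, then `fB v ∉ N(A)`. -/
lemma key_fB_not_nbrsA {G : SimpleGraph V} [DecidableRel G.Adj]
    {A B : Finset V} {fA fB : V → V}
    (hfA : ∀ v ∈ nbrs G A, fA v ∈ A ∧ G.Adj v (fA v))
    (hAinj : Set.InjOn fA (nbrs G A : Set V))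
    (hfB : ∀ v ∈ nbrs G B, fB v ∈ B ∧ G.Adj v (fB v))
    (hBinj : Set.InjOn fB (nbrs G B : Set V))
    {v : V} (hv : v ∈ nbrs G B) (hvA : v ∉ A) : fB v ∉ nbrs G A := by
  by_contra h
  -- iterate the two matchings to get an infinite sequence of distinct vertices
  set b : ℕ → V := fun n => (fun x => fB (fA x))^[n] (fB v) with hbdef
  have hstep : ∀ n, b (n + 1) = fB (fA (b n)) := by
    intro n
    simp only [hbdef, Function.iterate_succ_apply']
  have hb0 : b 0 = fB v := rfl
  -- invariant
  have inv : ∀ n, b n ∈ B ∧ b n ∈ nbrs G A ∧ fA (b n) ∈ nbrs G B := by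
    have step : ∀ x : V, x ∈ B → x ∈ nbrs G A →
        fA x ∈ nbrs G B ∧ fB (fA x) ∈ B ∧ fB (fA x) ∈ nbrs G A := by
      intro x hxB hxN
      obtain ⟨hfAx, hadj⟩ := hfA x hxN
      have h1 : fA x ∈ nbrs G B := mem_nbrs_aux.mpr ⟨x, hxB, hadj.symm⟩
      obtain ⟨h2, h3⟩ := hfB (fA x) h1
      have h4 : fB (fA x) ∈ nbrs G A := mem_nbrs_aux.mpr ⟨fA x, hfAx, h3.symm⟩
      exact ⟨h1, h2, h4⟩
    intro n
    induction n with
    | zero =>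
      have hB0 : b 0 ∈ B := hb0 ▸ (hfB v hv).1
      have hN0 : b 0 ∈ nbrs G A := hb0 ▸ h
      exact ⟨hB0, hN0, (step _ hB0 hN0).1⟩
    | succ k ih =>
      obtain ⟨hBk, hNk, _⟩ := ih
      obtain ⟨h1, h2, h3⟩ := step _ hBk hNk
      have hBs : b (k + 1) ∈ B := (hstep k) ▸ h2
      have hNs : b (k + 1) ∈ nbrs G A := (hstep k) ▸ h3
      exact ⟨hBs, hNs, (step _ hBs hNs).1⟩
  -- b never returns to b 0
  have h0 : ∀ m : ℕ, b 0 ≠ b (m + 1) := by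
    intro m heq
    rw [hb0, hstep m] at heq
    have : v = fA (b m) := hBinj (by simpa using hv) (by simpa using (inv m).2.2) heq
    exact hvA (this ▸ (hfA (b m) (inv m).2.1).1)
  -- b is injective on increasing pairs
  have hlt : ∀ i : ℕ, ∀ j : ℕ, i < j → b i ≠ b j := by
    intro i
    induction i with
    | zero =>
      intro j hj
      obtain ⟨m, rfl⟩ := Nat.exists_eq_add_of_lt hj
      simpa using h0 (0 + m)
    | succ k ih =>
      intro j hj heq
      obtain ⟨m, rfl⟩ := Nat.exists_eq_add_of_lt hj
      have heq' : fB (fA (b k)) = fB (fA (b (k + 1 + m))) := by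
        rw [hstep k] at heq
        rw [show k + 1 + m + 1 = (k + 1 + m) + 1 by omega, hstep (k + 1 + m)] at heq
        exact heq
      have h1 : fA (b k) = fA (b (k + 1 + m)) :=
        hBinj (by simpa using (inv k).2.2) (by simpa using (inv (k + 1 + m)).2.2) heq'
      have h2 : b k = b (k + 1 + m) :=
        hAinj (by simpa using (inv k).2.1) (by simpa using (inv (k + 1 + m)).2.1) h1
      exact ih (k + 1 + m) (by omega) h2
  have hinj : Function.Injective b := by
    intro i j hij
    rcases lt_trichotomy i j with hlt' | he | hlt'
    · exact absurd hij (hlt i j hlt')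
    · exact he
    · exact absurd hij.symm (hlt j i hlt')
  haveI : Infinite V := Infinite.of_injective b hinj
  exact not_finite V

end Aux

theorem crown_subset_closed_nbhd_max_crown (G : SimpleGraph V) [Fintype V] [DecidableEq V]
    [DecidableRel G.Adj] (A B : Finset V) (hA : IsCrown G A) (hB : IsCrown G B)
    (hBmax : ∀ C : Finset V, IsCrown G C → C.card ≤ B.card) :
    A ⊆ closedNbrs G B := by
  obtain ⟨hAind, fA, hfA, hAinj⟩ := hA
  obtain ⟨hBind, fB, hfB, hBinj⟩ := hB
  intro a ha
  by_contra hnot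
  have haB : a ∉ B := fun h => hnot (mem_union_left _ h)
  have haNB : a ∉ nbrs G B := fun h => hnot (mem_union_right _ h)
  set S : Finset V := A ∪ (B \ nbrs G A) with hSdef
  -- S is independent
  have hSind : IsIndep G S := by
    intro x hx y hy hadj
    rcases mem_union.mp hx with hxA | hxB
    · rcases mem_union.mp hy with hyA | hyB
      · exact hAind x hxA y hyA hadj
      · exact (mem_sdiff.mp hyB).2 (mem_nbrs_aux.mpr ⟨x, hxA, hadj.symm⟩)
    · rcases mem_union.mp hy with hyA | hyB
      · exact (mem_sdiff.mp hxB).2 (mem_nbrs_aux.mpr ⟨y, hyA, hadj⟩)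
      · exact hBind x (mem_sdiff.mp hxB).1 y (mem_sdiff.mp hyB).1 hadj
  -- facts about v ∈ N(S) \ N(A)
  have hfacts : ∀ v ∈ nbrs G S, v ∉ nbrs G A → v ∉ A ∧ v ∈ nbrs G B := by
    intro v hv hvA
    obtain ⟨s, hs, hadj⟩ := mem_nbrs_aux.mp hv
    have hvnA : v ∉ A := by
      intro hvA'
      exact hSind v (mem_union_left _ hvA') s hs hadj
    rcases mem_union.mp hs with hsA | hsB
    · exact absurd (mem_nbrs_aux.mpr ⟨s, hsA, hadj⟩) hvA
    · exact ⟨hvnA, mem_nbrs_aux.mpr ⟨s, (mem_sdiff.mp hsB).1, hadj⟩⟩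
  -- S is a crown
  have hScrown : IsCrown G S := by
    refine ⟨hSind, fun v => if v ∈ nbrs G A then fA v else fB v, ?_, ?_⟩
    · intro v hv
      by_cases hvA : v ∈ nbrs G A
      · simp only [hvA, if_pos]
        exact ⟨mem_union_left _ (hfA v hvA).1, (hfA v hvA).2⟩
      · obtain ⟨hvnA, hvB⟩ := hfacts v hv hvA
        have hkey := key_fB_not_nbrsA hfA hAinj hfB hBinj hvB hvnA
        simp only [hvA, if_neg, if_false]
        exact ⟨mem_union_right _ (mem_sdiff.mpr ⟨(hfB v hvB).1, hkey⟩), (hfB v hvB).2⟩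
    · intro v1 h1 v2 h2 heq
      have h1' : v1 ∈ nbrs G S := by simpa using h1
      have h2' : v2 ∈ nbrs G S := by simpa using h2
      by_cases hA1 : v1 ∈ nbrs G A <;> by_cases hA2 : v2 ∈ nbrs G A
      · simp only [hA1, hA2, if_pos] at heq
        exact hAinj (by simpa using hA1) (by simpa using hA2) heq
      · simp only [hA1, hA2, if_pos, if_neg, if_false] at heq
        obtain ⟨hv2nA, hv2B⟩ := hfacts v2 h2' hA2
        exact absurd (mem_nbrs_aux.mpr ⟨fA v1, (hfA v1 hA1).1, heq ▸ (hfB v2 hv2B).2⟩) hA2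
      · simp only [hA1, hA2, if_pos, if_neg, if_false] at heq
        obtain ⟨hv1nA, hv1B⟩ := hfacts v1 h1' hA1
        exact absurd (mem_nbrs_aux.mpr ⟨fA v2, (hfA v2 hA2).1, heq ▸ (hfB v1 hv1B).2⟩) hA1
      · simp only [hA1, hA2, if_neg, if_false] at heq
        obtain ⟨_, hv1B⟩ := hfacts v1 h1' hA1
        obtain ⟨_, hv2B⟩ := hfacts v2 h2' hA2
        exact hBinj (by simpa using hv1B) (by simpa using hv2B) heq
  -- B injects into S.erase a
  have hcard : B.card ≤ (S.erase a).card := by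
    apply Finset.card_le_card_of_injOn (fun x => if x ∈ nbrs G A then fA x else x)
    · intro x hx
      by_cases hxN : x ∈ nbrs G A
      · simp only [hxN, if_pos]
        refine mem_erase.mpr ⟨?_, mem_union_left _ (hfA x hxN).1⟩
        intro hfxa
        exact haNB (mem_nbrs_aux.mpr ⟨x, hx, hfxa ▸ (hfA x hxN).2.symm⟩)
      · simp only [hxN, if_neg, if_false]
        exact mem_erase.mpr ⟨fun h => haB (h ▸ hx), mem_union_right _ (mem_sdiff.mpr ⟨hx, hxN⟩)⟩
    · intro x hx y hy heq
      have hx' : x ∈ B := by simpa using hx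
      have hy' : y ∈ B := by simpa using hy
      by_cases hxN : x ∈ nbrs G A <;> by_cases hyN : y ∈ nbrs G A
      · simp only [hxN, hyN, if_pos] at heq
        exact hAinj (by simpa using hxN) (by simpa using hyN) heq
      · simp only [hxN, hyN, if_pos, if_neg, if_false] at heq
        exact absurd (heq ▸ (hfA x hxN).2) (hBind x hx' y hy')
      · simp only [hxN, hyN, if_pos, if_neg, if_false] at heq
        exact absurd (heq.symm ▸ (hfA y hyN).2) (hBind y hy' x hx')
      · simpa [hxN, hyN] using heq
  have haS : a ∈ S := mem_union_left _ ha
  have hlt : B.card < S.card := lt_of_le_of_lt hcard (card_erase_lt_of_mem haS)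
  exact absurd (hBmax S hScrown) (not_le.mpr hlt)
end

section
/- If A and B are maximum crowns of a graph G, then |A| − |N(A)| = |B| − |N(B)| and N[A] = N[B]. -/
open Finset

variable {V : Type*}

open CrownPaper

section CrownAux
set_option linter.unusedSectionVars false

open CrownPaper Finset

variable [Fintype V] [DecidableEq V] {G : SimpleGraph V} [DecidableRel G.Adj]

lemma mem_nbrs' {A : Finset V} {v : V} : v ∈ nbrs G A ↔ ∃ a ∈ A, G.Adj v a := by
  simp [nbrs]

lemma nbrs_mono' {A B : Finset V} (h : A ⊆ B) : nbrs G A ⊆ nbrs G B := by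
  intro v hv
  rw [mem_nbrs'] at hv ⊢
  obtain ⟨a, ha, hadj⟩ := hv
  exact ⟨a, h ha, hadj⟩

lemma nbrs_union' (A B : Finset V) : nbrs G (A ∪ B) = nbrs G A ∪ nbrs G B := by
  ext v
  simp only [mem_nbrs', Finset.mem_union]
  constructor
  · rintro ⟨a, ha | ha, hadj⟩
    · exact Or.inl ⟨a, ha, hadj⟩
    · exact Or.inr ⟨a, ha, hadj⟩
  · rintro (⟨a, ha, hadj⟩ | ⟨a, ha, hadj⟩)
    · exact ⟨a, Or.inl ha, hadj⟩
    · exact ⟨a, Or.inr ha, hadj⟩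

/-- L6: if `A`, `B` are crowns and `B ⊆ N[A]`, then `N(B) ⊆ N[A]`. -/
lemma nbrs_subset_closed' {A B : Finset V} (hA : IsCrown G A) (hB : IsCrown G B)
    (hBA : B ⊆ closedNbrs G A) : nbrs G B ⊆ closedNbrs G A := by
  obtain ⟨hAind, fA, hfA, hfAinj⟩ := hA
  obtain ⟨hBind, fB, hfB, hfBinj⟩ := hB
  intro v hv
  by_contra hvA
  rw [closedNbrs, Finset.mem_union, not_or] at hvA
  obtain ⟨hvA1, hvA2⟩ := hvA
  set B1 : Finset V := B ∩ nbrs G A with hB1def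
  have hmemN : ∀ b ∈ B1, fA b ∈ A ∧ G.Adj b (fA b) := fun b hb =>
    hfA b (Finset.mem_inter.mp hb).2
  have hfANB : ∀ b ∈ B1, fA b ∈ nbrs G B := by
    intro b hb
    exact mem_nbrs'.mpr ⟨b, (Finset.mem_inter.mp hb).1, ((hmemN b hb).2).symm⟩
  have hpsi : ∀ b ∈ B1, fB (fA b) ∈ B1 := by
    intro b hb
    obtain ⟨hfa_A, _⟩ := hmemN b hb
    obtain ⟨hfb_B, hadj2⟩ := hfB _ (hfANB b hb)
    have hnA : fB (fA b) ∉ A := fun hmem => hAind _ hfa_A _ hmem hadj2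
    have hcl : fB (fA b) ∈ closedNbrs G A := hBA hfb_B
    rw [closedNbrs, Finset.mem_union] at hcl
    exact Finset.mem_inter.mpr ⟨hfb_B, hcl.resolve_left hnA⟩
  have hinj : Set.InjOn (fun b => fB (fA b)) (B1 : Set V) := by
    intro x hx y hy hxy
    have hx' : x ∈ B1 := hx
    have hy' : y ∈ B1 := hy
    have h1 : fA x = fA y := hfBinj (hfANB x hx') (hfANB y hy') hxy
    exact hfAinj (Finset.mem_coe.mpr (Finset.mem_inter.mp hx').2)
      (Finset.mem_coe.mpr (Finset.mem_inter.mp hy').2) h1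
  have himage : Finset.image (fun b => fB (fA b)) B1 = B1 := by
    apply Finset.eq_of_subset_of_card_le
    · intro x hx
      obtain ⟨b, hb, rfl⟩ := Finset.mem_image.mp hx
      exact hpsi b hb
    · rw [Finset.card_image_of_injOn hinj]
  have hfBv : fB v ∈ B1 := by
    obtain ⟨hfvB, hadj⟩ := hfB v hv
    have hnA : fB v ∉ A := fun hmem => hvA2 (mem_nbrs'.mpr ⟨fB v, hmem, hadj⟩)
    have hcl := hBA hfvB
    rw [closedNbrs, Finset.mem_union] at hcl
    exact Finset.mem_inter.mpr ⟨hfvB, hcl.resolve_left hnA⟩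
  rw [← himage] at hfBv
  obtain ⟨b, hb, heq⟩ := Finset.mem_image.mp hfBv
  have hfABv : fA b = v := hfBinj (hfANB b hb) hv heq
  exact hvA1 (hfABv ▸ (hmemN b hb).1)

end CrownAux

section CrownCore
set_option linter.unusedSectionVars false
set_option linter.unusedVariables false

open CrownPaper Finset

variable [Fintype V] [DecidableEq V] {G : SimpleGraph V} [DecidableRel G.Adj]

lemma hall_core' {A B : Finset V} (hAind : IsIndep G A) (hBind : IsIndep G B)
    (fA fB : V → V)
    (hfA : ∀ v ∈ nbrs G A, fA v ∈ A ∧ G.Adj v (fA v)) (hfAinj : Set.InjOn fA (nbrs G A : Set V))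
    (hfB : ∀ v ∈ nbrs G B, fB v ∈ B ∧ G.Adj v (fB v)) (hfBinj : Set.InjOn fB (nbrs G B : Set V))
    (T : Finset V) (hT : T ⊆ nbrs G (A ∪ (B \ closedNbrs G A))) :
    T.card ≤ (T.biUnion fun v => (A ∪ (B \ closedNbrs G A)).filter (fun c => G.Adj v c)).card := by
  set B' := B \ closedNbrs G A with hB'def
  set T1 := T ∩ nbrs G A with hT1def
  set T2 := T \ nbrs G A with hT2def
  have hB'B : B' ⊆ B := Finset.sdiff_subset
  have hB'notA : ∀ b ∈ B', b ∉ A := fun b hb hbA =>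
    (Finset.mem_sdiff.mp hb).2 (Finset.mem_union_left _ hbA)
  have hB'notN : ∀ b ∈ B', b ∉ nbrs G A := fun b hb hbN =>
    (Finset.mem_sdiff.mp hb).2 (Finset.mem_union_right _ hbN)
  have hT2B' : T2 ⊆ nbrs G B' := by
    intro t ht
    obtain ⟨htT, htN⟩ := Finset.mem_sdiff.mp ht
    have := hT htT
    rw [nbrs_union', Finset.mem_union] at this
    exact this.resolve_left htN
  have hT2A : ∀ t ∈ T2, t ∉ A := by
    intro t ht htA
    obtain ⟨b', hb', hadj⟩ := mem_nbrs'.mp (hT2B' ht)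
    exact hB'notN b' hb' (mem_nbrs'.mpr ⟨t, htA, hadj.symm⟩)
  set B1 : Finset V := B ∩ nbrs G A with hB1def
  set F : Finset V → Finset V := fun Z => (nbrs G Z ∩ B1).image fA with hFdef
  set Y : ℕ → Finset V := fun k => Nat.rec (F T2) (fun _ Yk => Yk ∪ F Yk) k with hYdef
  have hY0 : Y 0 = F T2 := rfl
  have hYsucc : ∀ k, Y (k + 1) = Y k ∪ F (Y k) := fun k => rfl
  have hFA : ∀ Z, F Z ⊆ A := by
    intro Z x hx
    obtain ⟨b, hb, rfl⟩ := Finset.mem_image.mp hx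
    exact (hfA b (Finset.mem_inter.mp (Finset.mem_inter.mp hb).2).2).1
  have hFNB : ∀ Z, F Z ⊆ nbrs G B := by
    intro Z x hx
    obtain ⟨b, hb, rfl⟩ := Finset.mem_image.mp hx
    have hbB : b ∈ B := (Finset.mem_inter.mp (Finset.mem_inter.mp hb).2).1
    have hbN : b ∈ nbrs G A := (Finset.mem_inter.mp (Finset.mem_inter.mp hb).2).2
    exact mem_nbrs'.mpr ⟨b, hbB, (hfA b hbN).2.symm⟩
  have hYA : ∀ k, Y k ⊆ A := by
    intro k
    induction k with
    | zero => exact hFA T2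
    | succ n ih => rw [hYsucc]; exact Finset.union_subset ih (hFA _)
  have hYNB : ∀ k, Y k ⊆ nbrs G B := by
    intro k
    induction k with
    | zero => exact hFNB T2
    | succ n ih => rw [hYsucc]; exact Finset.union_subset ih (hFNB _)
  have hYmono : ∀ k, Y k ⊆ Y (k + 1) := fun k => by
    rw [hYsucc]; exact Finset.subset_union_left
  have hYle : ∀ i j, i ≤ j → Y i ⊆ Y j := by
    intro i j hij
    induction hij with
    | refl => exact Finset.Subset.refl _
    | step _ ih => exact ih.trans (hYmono _)
  have hstab : ∃ k, Y (k + 1) = Y k := by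
    by_contra h
    push_neg at h
    have hcard : ∀ k, k ≤ (Y k).card := by
      intro k
      induction k with
      | zero => exact Nat.zero_le _
      | succ n ih =>
        have hss : Y n ⊂ Y (n + 1) := Finset.ssubset_iff_subset_ne.mpr ⟨hYmono n, (h n).symm⟩
        have := Finset.card_lt_card hss
        omega
    have h1 := hcard (Fintype.card V + 1)
    have h2 := Finset.card_le_univ (Y (Fintype.card V + 1))
    omega
  obtain ⟨k, hfix⟩ := hstab
  set X := Y k with hXdef
  have hFX : F X ⊆ X := by
    intro x hx
    have : x ∈ Y (k + 1) := by rw [hYsucc]; exact Finset.mem_union_right _ hx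
    rwa [hfix] at this
  have hY0X : F T2 ⊆ X := by rw [← hY0]; exact hYle 0 k (Nat.zero_le k)
  have hXA : X ⊆ A := hYA k
  have hXNB : X ⊆ nbrs G B := hYNB k
  set S := T2 ∪ X with hSdef
  have hST2disj : Disjoint T2 X := by
    rw [Finset.disjoint_left]
    intro t ht htX
    exact hT2A t ht (hXA htX)
  have hSNB : S ⊆ nbrs G B :=
    Finset.union_subset (hT2B'.trans (nbrs_mono' hB'B)) hXNB
  set M := S.image fB with hMdef
  have hMcard : M.card = T2.card + X.card := by
    rw [hMdef, Finset.card_image_of_injOn (hfBinj.mono (Finset.coe_subset.mpr hSNB)),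
      Finset.card_union_of_disjoint hST2disj]
  have hMB : ∀ m ∈ M, m ∈ B := by
    intro m hm
    obtain ⟨s, hs, rfl⟩ := Finset.mem_image.mp hm
    exact (hfB s (hSNB hs)).1
  have hMnotA : ∀ m ∈ M, m ∉ A := by
    intro m hm hmA
    obtain ⟨s, hs, rfl⟩ := Finset.mem_image.mp hm
    have hadj := (hfB s (hSNB hs)).2
    rcases Finset.mem_union.mp hs with hsT | hsX
    · exact (Finset.mem_sdiff.mp hsT).2 (mem_nbrs'.mpr ⟨fB s, hmA, hadj⟩)
    · exact hAind s (hXA hsX) _ hmA hadj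
  set M1 := M ∩ nbrs G A with hM1def
  set M2 := M \ nbrs G A with hM2def
  have hM1X : M1.image fA ⊆ X := by
    intro x hx
    obtain ⟨m, hm, rfl⟩ := Finset.mem_image.mp hx
    obtain ⟨hmM, hmN⟩ := Finset.mem_inter.mp hm
    obtain ⟨s, hs, hval⟩ := Finset.mem_image.mp hmM
    have hadj : G.Adj s m := hval ▸ (hfB s (hSNB hs)).2
    have hmB1 : m ∈ B1 := Finset.mem_inter.mpr ⟨hMB m hmM, hmN⟩
    rcases Finset.mem_union.mp hs with hsT | hsX
    · exact hY0X (Finset.mem_image.mpr ⟨m,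
        Finset.mem_inter.mpr ⟨mem_nbrs'.mpr ⟨s, hsT, hadj.symm⟩, hmB1⟩, rfl⟩)
    · exact hFX (Finset.mem_image.mpr ⟨m,
        Finset.mem_inter.mpr ⟨mem_nbrs'.mpr ⟨s, hsX, hadj.symm⟩, hmB1⟩, rfl⟩)
  have hM1card : M1.card ≤ X.card := by
    have h1 : (M1.image fA).card = M1.card :=
      Finset.card_image_of_injOn (hfAinj.mono (by
        intro m hm
        exact Finset.mem_coe.mpr (Finset.mem_inter.mp (Finset.mem_coe.mp hm)).2))
    rw [← h1]
    exact Finset.card_le_card hM1X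
  have hM2sub : M2 ⊆ nbrs G T2 ∩ B' := by
    intro m hm
    obtain ⟨hmM, hmN⟩ := Finset.mem_sdiff.mp hm
    have hmB' : m ∈ B' := Finset.mem_sdiff.mpr ⟨hMB m hmM, by
      rw [closedNbrs, Finset.mem_union]
      exact fun h => h.elim (hMnotA m hmM) hmN⟩
    obtain ⟨s, hs, hval⟩ := Finset.mem_image.mp hmM
    have hadj : G.Adj s m := hval ▸ (hfB s (hSNB hs)).2
    rcases Finset.mem_union.mp hs with hsT | hsX
    · exact Finset.mem_inter.mpr ⟨mem_nbrs'.mpr ⟨s, hsT, hadj.symm⟩, hmB'⟩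
    · exact absurd (mem_nbrs'.mpr ⟨s, hXA hsX, hadj.symm⟩) hmN
  have hMsplit : M1.card + M2.card = M.card := Finset.card_inter_add_card_sdiff M (nbrs G A)
  have hT2card : T2.card ≤ (nbrs G T2 ∩ B').card := by
    have := Finset.card_le_card hM2sub
    omega
  -- now conclude
  have h1 : T1.image fA ⊆ T.biUnion fun v => (A ∪ B').filter (fun c => G.Adj v c) := by
    intro x hx
    obtain ⟨t, ht, rfl⟩ := Finset.mem_image.mp hx
    obtain ⟨htT, htN⟩ := Finset.mem_inter.mp ht
    exact Finset.mem_biUnion.mpr ⟨t, htT, Finset.mem_filter.mpr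
      ⟨Finset.mem_union_left _ (hfA t htN).1, (hfA t htN).2⟩⟩
  have h2 : nbrs G T2 ∩ B' ⊆ T.biUnion fun v => (A ∪ B').filter (fun c => G.Adj v c) := by
    intro b hb
    obtain ⟨hbN, hbB'⟩ := Finset.mem_inter.mp hb
    obtain ⟨t, ht, hadj⟩ := mem_nbrs'.mp hbN
    exact Finset.mem_biUnion.mpr ⟨t, (Finset.mem_sdiff.mp ht).1, Finset.mem_filter.mpr
      ⟨Finset.mem_union_right _ hbB', hadj.symm⟩⟩
  have hdisjU : Disjoint (T1.image fA) (nbrs G T2 ∩ B') := by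
    rw [Finset.disjoint_left]
    intro x hx hx2
    obtain ⟨t, ht, rfl⟩ := Finset.mem_image.mp hx
    have hxA : fA t ∈ A := (hfA t (Finset.mem_inter.mp ht).2).1
    exact hB'notA _ (Finset.mem_inter.mp hx2).2 hxA
  have hTsplit : T1.card + T2.card = T.card := Finset.card_inter_add_card_sdiff T (nbrs G A)
  have hT1card : (T1.image fA).card = T1.card :=
    Finset.card_image_of_injOn (hfAinj.mono (by
      intro t ht
      exact Finset.mem_coe.mpr (Finset.mem_inter.mp (Finset.mem_coe.mp ht)).2))
  have hunion := Finset.card_union_of_disjoint hdisjU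
  have hsub := Finset.card_le_card (Finset.union_subset h1 h2)
  omega

end CrownCore

section CrownFinal
set_option linter.unusedSectionVars false
set_option linter.unusedVariables false

open CrownPaper Finset

variable [Fintype V] [DecidableEq V] {G : SimpleGraph V} [DecidableRel G.Adj]

lemma crown_union' {A B : Finset V} (hA : IsCrown G A) (hB : IsCrown G B) :
    IsCrown G (A ∪ (B \ closedNbrs G A)) := by
  obtain ⟨hAind, fA, hfA, hfAinj⟩ := hA
  obtain ⟨hBind, fB, hfB, hfBinj⟩ := hB
  set B' := B \ closedNbrs G A with hB'def
  set C := A ∪ B' with hCdef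
  have hB'notA : ∀ b ∈ B', b ∉ A := fun b hb hbA =>
    (Finset.mem_sdiff.mp hb).2 (Finset.mem_union_left _ hbA)
  have hB'notN : ∀ b ∈ B', b ∉ nbrs G A := fun b hb hbN =>
    (Finset.mem_sdiff.mp hb).2 (Finset.mem_union_right _ hbN)
  have hCind : IsIndep G C := by
    intro a ha b hb hadj
    rcases Finset.mem_union.mp ha with haA | haB <;> rcases Finset.mem_union.mp hb with hbA | hbB
    · exact hAind a haA b hbA hadj
    · exact hB'notN b hbB (mem_nbrs'.mpr ⟨a, haA, hadj.symm⟩)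
    · exact hB'notN a haB (mem_nbrs'.mpr ⟨b, hbA, hadj⟩)
    · exact hBind a ((Finset.mem_sdiff.mp haB).1) b ((Finset.mem_sdiff.mp hbB).1) hadj
  refine ⟨hCind, ?_⟩
  have hallcond : ∀ T' : Finset {v // v ∈ nbrs G C},
      T'.card ≤ (T'.biUnion fun x => C.filter (fun c => G.Adj x.1 c)).card := by
    intro T'
    have hsub : T'.image Subtype.val ⊆ nbrs G C := by
      intro v hv
      obtain ⟨x, _, rfl⟩ := Finset.mem_image.mp hv
      exact x.2
    have hmain := hall_core' hAind hBind fA fB hfA hfAinj hfB hfBinj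
      (T'.image Subtype.val) hsub
    rw [Finset.image_biUnion] at hmain
    rwa [Finset.card_image_of_injective _ Subtype.val_injective] at hmain
  obtain ⟨f, hfinj, hf⟩ := (Finset.all_card_le_biUnion_card_iff_existsInjective'
    (fun x : {v // v ∈ nbrs G C} => C.filter (fun c => G.Adj x.1 c))).mp hallcond
  refine ⟨fun v => if h : v ∈ nbrs G C then f ⟨v, h⟩ else v, ?_, ?_⟩
  · intro v hv
    dsimp only
    rw [dif_pos hv]
    have := Finset.mem_filter.mp (hf ⟨v, hv⟩)
    exact ⟨this.1, this.2⟩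
  · intro x hx y hy hxy
    rw [Finset.mem_coe] at hx hy
    dsimp only at hxy
    rw [dif_pos hx, dif_pos hy] at hxy
    exact congrArg Subtype.val (hfinj hxy)

end CrownFinal



theorem max_crowns_same_diff_and_closed_nbhd (G : SimpleGraph V) [Fintype V] [DecidableEq V]
    [DecidableRel G.Adj] (A B : Finset V) (hA : IsCrown G A)
    (hAmax : ∀ C : Finset V, IsCrown G C → C.card ≤ A.card)
    (hB : IsCrown G B) (hBmax : ∀ C : Finset V, IsCrown G C → C.card ≤ B.card) :
    diff G A = diff G B ∧ closedNbrs G A = closedNbrs G B := by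
  have key : ∀ (A' B' : Finset V), IsCrown G A' →
      (∀ C : Finset V, IsCrown G C → C.card ≤ A'.card) → IsCrown G B' →
      B' ⊆ closedNbrs G A' := by
    intro A' B' hA' hA'max hB'
    have hc := crown_union' hA' hB'
    have hcard := hA'max _ hc
    have hdisj : Disjoint A' (B' \ closedNbrs G A') := by
      rw [Finset.disjoint_left]
      intro a ha hb
      exact (Finset.mem_sdiff.mp hb).2 (Finset.mem_union_left _ ha)
    rw [Finset.card_union_of_disjoint hdisj] at hcard
    have hempty : B' \ closedNbrs G A' = ∅ := Finset.card_eq_zero.mp (by omega)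
    intro b hb
    by_contra h
    have hmem : b ∈ B' \ closedNbrs G A' := Finset.mem_sdiff.mpr ⟨hb, h⟩
    rw [hempty] at hmem
    exact absurd hmem (Finset.notMem_empty b)
  have hBA : B ⊆ closedNbrs G A := key A B hA hAmax hB
  have hAB : A ⊆ closedNbrs G B := key B A hB hBmax hA
  have hN : closedNbrs G A = closedNbrs G B := by
    apply Finset.Subset.antisymm
    · rw [closedNbrs]
      exact Finset.union_subset hAB (nbrs_subset_closed' hB hA hAB)
    · rw [closedNbrs]
      exact Finset.union_subset hBA (nbrs_subset_closed' hA hB hBA)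
  refine ⟨?_, hN⟩
  have hAcard : A.card = B.card := le_antisymm (hBmax A hA) (hAmax B hB)
  have hdA : Disjoint A (nbrs G A) := by
    rw [Finset.disjoint_left]
    intro a ha hnb
    obtain ⟨a', ha', hadj⟩ := mem_nbrs'.mp hnb
    exact hA.1 a ha a' ha' hadj
  have hdB : Disjoint B (nbrs G B) := by
    rw [Finset.disjoint_left]
    intro a ha hnb
    obtain ⟨a', ha', hadj⟩ := mem_nbrs'.mp hnb
    exact hB.1 a ha a' ha' hadj
  have hcards : A.card + (nbrs G A).card = B.card + (nbrs G B).card := by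
    rw [← Finset.card_union_of_disjoint hdA, ← Finset.card_union_of_disjoint hdB]
    exact congrArg Finset.card hN
  rw [diff, diff]
  have hnn : (nbrs G A).card = (nbrs G B).card := by omega
  rw [hAcard, hnn]
end

section
/- If A and B are crowns of a graph G such that A ∪ B is an independent set, then A ∪ B is a crown of G. -/
open Finset

variable {V : Type*}

open CrownPaper

theorem crown_union_of_indep (G : SimpleGraph V) [Fintype V] [DecidableEq V]
    [DecidableRel G.Adj] (A B : Finset V) (hA : IsCrown G A) (hB : IsCrown G B)
    (hAB : IsIndep G (A ∪ B)) : IsCrown G (A ∪ B) := by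
  obtain ⟨hAi, fA, hfA, hfAinj⟩ := hA
  obtain ⟨hBi, fB, hfB, hfBinj⟩ := hB
  have hmem : ∀ (S : Finset V) (v : V), v ∈ nbrs G S ↔ ∃ a ∈ S, G.Adj v a := by
    intro S v; simp [nbrs]
  have hunion : ∀ v, v ∈ nbrs G (A ∪ B) ↔ v ∈ nbrs G A ∨ v ∈ nbrs G B := by
    intro v
    simp only [hmem, Finset.mem_union]
    constructor
    · rintro ⟨a, ha | ha, hadj⟩
      · exact Or.inl ⟨a, ha, hadj⟩
      · exact Or.inr ⟨a, ha, hadj⟩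
    · rintro (⟨a, ha, hadj⟩ | ⟨a, ha, hadj⟩)
      · exact ⟨a, Or.inl ha, hadj⟩
      · exact ⟨a, Or.inr ha, hadj⟩
  refine ⟨hAB, fun v => if v ∈ nbrs G A then fA v else fB v, ?_, ?_⟩
  · intro v hv
    rcases (hunion v).1 hv with hvA | hvB
    · simp only [if_pos hvA]
      exact ⟨Finset.mem_union_left _ (hfA v hvA).1, (hfA v hvA).2⟩
    · by_cases hvA : v ∈ nbrs G A
      · simp only [if_pos hvA]
        exact ⟨Finset.mem_union_left _ (hfA v hvA).1, (hfA v hvA).2⟩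
      · simp only [if_neg hvA]
        exact ⟨Finset.mem_union_right _ (hfB v hvB).1, (hfB v hvB).2⟩
  · intro v hv w hw hvw
    simp only [Finset.coe_filter, Finset.mem_coe] at hv hw
    by_cases hvA : v ∈ nbrs G A <;> by_cases hwA : w ∈ nbrs G A
    · simp only [if_pos hvA, if_pos hwA] at hvw
      exact hfAinj hvA hwA hvw
    · simp only [if_pos hvA, if_neg hwA] at hvw
      -- fA v = fB w, fA v ∈ A, fB w ∈ B, w adj fB w so w ∈ nbrs G A, contra
      exfalso
      apply hwA
      have hw' : w ∈ nbrs G B := by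
        rcases (hunion w).1 hw with h | h
        · exact absurd h hwA
        · exact h
      refine (hmem A w).2 ⟨fB w, ?_, (hfB w hw').2⟩
      rw [← hvw]; exact (hfA v hvA).1
    · simp only [if_neg hvA, if_pos hwA] at hvw
      exfalso
      apply hvA
      have hv' : v ∈ nbrs G B := by
        rcases (hunion v).1 hv with h | h
        · exact absurd h hvA
        · exact h
      refine (hmem A v).2 ⟨fB v, ?_, (hfB v hv').2⟩
      rw [hvw]; exact (hfA w hwA).1
    · simp only [if_neg hvA, if_neg hwA] at hvw
      have hv' : v ∈ nbrs G B := by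
        rcases (hunion v).1 hv with h | h
        · exact absurd h hvA
        · exact h
      have hw' : w ∈ nbrs G B := by
        rcases (hunion w).1 hw with h | h
        · exact absurd h hwA
        · exact h
      exact hfBinj hv' hw' hvw
end

section
/- If A and B are disjoint local maximum independent sets of G such that A ∪ B is independent, then A ∪ B is a local maximum independent set of G. -/
open Finset

variable {V : Type*}

open CrownPaper

theorem local_max_indep_union (G : SimpleGraph V) [Fintype V] [DecidableEq V]
    [DecidableRel G.Adj] (A B : Finset V) (hd : Disjoint A B)
    (hA : IsLocalMaxIndep G A) (hB : IsLocalMaxIndep G B)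
    (hAB : IsIndep G (A ∪ B)) : IsLocalMaxIndep G (A ∪ B) := by
  refine ⟨hAB, fun I hI hIsub => ?_⟩
  have hUnion : closedNbrs G (A ∪ B) = closedNbrs G A ∪ closedNbrs G B := by
    simp only [closedNbrs, nbrs]
    ext v
    simp only [Finset.mem_union, Finset.mem_filter, Finset.mem_univ, true_and]
    aesop
  rw [hUnion] at hIsub
  have h1 : (I ∩ closedNbrs G A).card ≤ A.card :=
    hA.2 _ (fun a ha b hb => hI a (Finset.mem_of_mem_inter_left ha) b
      (Finset.mem_of_mem_inter_left hb)) (Finset.inter_subset_right)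
  have h2 : (I \ closedNbrs G A).card ≤ B.card := by
    refine hB.2 _ (fun a ha b hb => hI a (Finset.mem_sdiff.mp ha).1 b
      (Finset.mem_sdiff.mp hb).1) (fun x hx => ?_)
    rcases Finset.mem_union.mp (hIsub (Finset.mem_sdiff.mp hx).1) with h | h
    · exact absurd h (Finset.mem_sdiff.mp hx).2
    · exact h
  have hcard : (I ∩ closedNbrs G A).card + (I \ closedNbrs G A).card = I.card :=
    Finset.card_inter_add_card_sdiff I (closedNbrs G A)
  have hAB' : (A ∪ B).card = A.card + B.card := Finset.card_union_of_disjoint hd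
  omega
end
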